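/- arXiv:2109.11470 — 3 statements merged into one kernel-verified Lean document; each statement's English description precedes it below -/
import Mathlib

section
/- Let ψ : V → Ṽ be a similarity of ratio c between quadratic spaces (V,Q) and (Ṽ,Q̃), i.e. a linear bijection with c·Q(x) = Q̃(ψ(x)) for all x. Then there exists a unique algebra homomorphism Cl₀(ψ) : Cl₀(V,Q) → Cl₀(Ṽ,Q̃) between the even Clifford subalgebras such that Cl₀(ψ)(x·y) = c⁻¹·ψ(x)·ψ(y) for all x, y ∈ V. -/
/-!
The bilinear map `(x, y) ↦ c⁻¹ • ψ x ψ y` into `Cl₀(Q̃)` satisfies the two relations that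
characterise maps out of `Cl₀(Q)` (`CliffordAlgebra.EvenHom`): on the diagonal,
`c⁻¹ • ψ x ψ x = c⁻¹ Q̃(ψ x) = Q x`, and the contraction across the middle picks up
`c⁻² Q̃(ψ y) = c⁻¹ Q y`. The universal property of the even subalgebra then gives existence,
and uniqueness holds because products of two vectors generate `Cl₀(Q)`.
-/

namespace CliffordAlgebra

variable {R M N : Type*} [CommRing R] [AddCommGroup M] [Module R M] [AddCommGroup N] [Module R N]
  {Q : QuadraticForm R M} {Q' : QuadraticForm R N}

def EvenHom.ofSimilarity (f : M →ₗ[R] N) (a : R) (h : ∀ m, a * Q' (f m) = Q m) :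
    EvenHom Q (even Q') where
  bilin := a • (even.ι Q').bilin.compl₁₂ f f
  contract m := by
    simp only [LinearMap.smul_apply, LinearMap.compl₁₂_apply, (even.ι Q').contract,
      Algebra.smul_def, ← map_mul, h]
  contract_mid m₁ m₂ m₃ := by
    simp only [LinearMap.smul_apply, LinearMap.compl₁₂_apply, smul_mul_smul_comm,
      (even.ι Q').contract_mid, smul_smul, ← h m₂]
    ring_nf

end CliffordAlgebra

open CliffordAlgebra in
/-- A similarity `ψ` of ratio `c` between quadratic spaces induces a unique algebra
homomorphism between the even Clifford subalgebras with
`Cl₀(ψ)(x·y) = c⁻¹·ψ(x)·ψ(y)`. -/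
theorem even_clifford_hom_of_similarity {F V W : Type*} [Field F]
    [AddCommGroup V] [Module F V] [AddCommGroup W] [Module F W]
    (Q : QuadraticForm F V) (Q' : QuadraticForm F W)
    (ψ : V ≃ₗ[F] W) (c : F) (hc : c ≠ 0) (hψ : ∀ x : V, c * Q x = Q' (ψ x)) :
    ∃! f : CliffordAlgebra.even Q →ₐ[F] CliffordAlgebra.even Q',
      ∀ x y : V,
        (f ⟨CliffordAlgebra.ι Q x * CliffordAlgebra.ι Q y,
            CliffordAlgebra.ι_mul_ι_mem_evenOdd_zero Q x y⟩ : CliffordAlgebra Q') =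
          c⁻¹ • (CliffordAlgebra.ι Q' (ψ x) * CliffordAlgebra.ι Q' (ψ y)) := by
  have hψ' : ∀ x, c⁻¹ * Q' (ψ.toLinearMap x) = Q x := fun x => by
    rw [LinearEquiv.coe_coe, ← hψ, inv_mul_cancel_left₀ hc]
  let g := EvenHom.ofSimilarity ψ.toLinearMap c⁻¹ hψ'
  refine ⟨even.lift Q g, fun x y => congrArg Subtype.val (even.lift_ι Q g x y), fun f hf => ?_⟩
  refine even.algHom_ext Q (EvenHom.ext (LinearMap.ext₂ fun x y => Subtype.ext ?_))
  exact (hf x y).trans (congrArg Subtype.val (even.lift_ι Q g x y)).symm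
end

section
/- Let ψ : V → Ṽ be a similarity of ratio c ∈ F^× with Clifford extension Cl(ψ). If m is a homogeneous invertible element of Cl(V,Q), then Cl(ψ)(m)·Cl(ψ)(m⁻¹) = c^{∂m}; in particular Cl(ψ)(m) is invertible in Cl(Ṽ,Q̃). -/
open CliffordAlgebra

/- If `u` is homogeneous of degree `i`, comparing degree-`0` components in `u⁻¹ * u = 1` shows
that the degree-`(-i)` component of `u⁻¹` is already a left inverse of `u`, hence equals `u⁻¹`. -/
theorem SetLike.val_inv_mem_graded {ι A σ : Type*} [DecidableEq ι] [AddGroup ι] [Semiring A]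
    [SetLike σ A] [AddSubmonoidClass σ A] (𝒜 : ι → σ) [GradedRing 𝒜] {u : Aˣ} {i : ι}
    (hu : (u : A) ∈ 𝒜 i) : ((u⁻¹ : Aˣ) : A) ∈ 𝒜 (-i) := by
  have h := DirectSum.coe_decompose_mul_add_of_right_mem 𝒜 (a := ((u⁻¹ : Aˣ) : A)) (i := -i) hu
  rw [Units.inv_mul, neg_add_cancel,
    DirectSum.decompose_of_mem_same 𝒜 SetLike.GradedOne.one_mem] at h
  rw [← Units.eq_inv_of_mul_eq_one_right h.symm]
  exact SetLike.coe_mem _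

theorem isUnit_of_mul_eq_smul_one {K A : Type*} [Field K] [Semiring A] [Algebra K A]
    {a b : A} {r : K} (hr : r ≠ 0) (hab : a * b = r • 1) (hba : b * a = r • 1) : IsUnit a :=
  ⟨⟨a, r⁻¹ • b, by rw [mul_smul_comm, hab, inv_smul_smul₀ hr],
    by rw [smul_mul_assoc, hba, inv_smul_smul₀ hr]⟩, rfl⟩

theorem ZMod.val_mul_self_two (i : ZMod 2) : i.val * i.val = i.val := by
  fin_cases i <;> rfl

theorem clifford_extension_invertible_general {F V W : Type*} [Field F]
    [AddCommGroup V] [Module F V] [AddCommGroup W] [Module F W]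
    (Q : QuadraticForm F V) (Q' : QuadraticForm F W)
    (c : F) (hc : c ≠ 0)
    (g : CliffordAlgebra Q →ₗ[F] CliffordAlgebra Q')
    (hg_one : g 1 = 1)
    -- the characterising product formula of the Clifford extension:
    (hg_mul : ∀ (i j : ZMod 2) (m n : CliffordAlgebra Q),
      m ∈ evenOdd Q i → n ∈ evenOdd Q j →
      g (m * n) = (c⁻¹) ^ (i.val * j.val) • (g m * g n))
    (u : (CliffordAlgebra Q)ˣ) (i : ZMod 2) (hu : (u : CliffordAlgebra Q) ∈ evenOdd Q i) :
    g (u : CliffordAlgebra Q) * g ((u⁻¹ : (CliffordAlgebra Q)ˣ) : CliffordAlgebra Q) =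
        c ^ i.val • (1 : CliffordAlgebra Q') ∧
      IsUnit (g (u : CliffordAlgebra Q)) := by
  have hu_inv : ((u⁻¹ : (CliffordAlgebra Q)ˣ) : CliffordAlgebra Q) ∈ evenOdd Q i := by
    simpa only [ZMod.neg_eq_self_mod_two] using SetLike.val_inv_mem_graded (evenOdd Q) hu
  have inverse_pair : ∀ m n : CliffordAlgebra Q, m ∈ evenOdd Q i → n ∈ evenOdd Q i →
      m * n = 1 → g m * g n = c ^ i.val • 1 := by
    intro m n hm hn hmn
    have h := hg_mul i i m n hm hn
    rw [hmn, hg_one, ZMod.val_mul_self_two, inv_pow] at h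
    exact (inv_smul_eq_iff₀ (pow_ne_zero _ hc)).mp h.symm
  have h_right := inverse_pair _ _ hu hu_inv u.mul_inv
  have h_left := inverse_pair _ _ hu_inv hu u.inv_mul
  exact ⟨h_right, isUnit_of_mul_eq_smul_one (pow_ne_zero _ hc) h_right h_left⟩

/-- If `m` is a homogeneous invertible element of `Cl(V,Q)` of degree `∂m`, then the
Clifford extension `Cl(ψ)` of a similarity of ratio `c` satisfies
`Cl(ψ)(m)·Cl(ψ)(m⁻¹) = c^{∂m}`; in particular `Cl(ψ)(m)` is invertible. -/
theorem clifford_extension_invertible {F V W : Type*} [Field F]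
    [AddCommGroup V] [Module F V] [AddCommGroup W] [Module F W]
    (Q : QuadraticForm F V) (Q' : QuadraticForm F W)
    (ψ : V ≃ₗ[F] W) (c : F) (hc : c ≠ 0) (hψ : ∀ x : V, c * Q x = Q' (ψ x))
    (g : CliffordAlgebra Q →ₗ[F] CliffordAlgebra Q')
    (hg_one : g 1 = 1)
    -- the characterising product formula of the Clifford extension:
    (hg_mul : ∀ (i j : ZMod 2) (m n : CliffordAlgebra Q),
      m ∈ evenOdd Q i → n ∈ evenOdd Q j →
      g (m * n) = (c⁻¹) ^ (i.val * j.val) • (g m * g n))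
    (u : (CliffordAlgebra Q)ˣ) (i : ZMod 2) (hu : (u : CliffordAlgebra Q) ∈ evenOdd Q i) :
    g (u : CliffordAlgebra Q) * g ((u⁻¹ : (CliffordAlgebra Q)ˣ) : CliffordAlgebra Q) =
        c ^ i.val • (1 : CliffordAlgebra Q') ∧
      IsUnit (g (u : CliffordAlgebra Q)) :=
  clifford_extension_invertible_general Q Q' c hc g hg_one hg_mul u i hu
end

section
/- Let s, t ∈ V with Q(s) = Q(t) = B(s,t) = 0 and set p := 1 + s·t ∈ Cl(V,Q). Then for all x ∈ V, the element p·x·σ(p)⁻¹ lies in V and equals x + B(t,x)·s − B(s,x)·t, where σ is the main involution of Cl(V,Q). -/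
open CliffordAlgebra

/-- For `s, t ∈ V` with `Q(s) = Q(t) = B(s,t) = 0` and `p := 1 + s·t`, the element
`p·x·σ(p)⁻¹` lies in `V` and equals `x + B(t,x)·s − B(s,x)·t`; here `q` is the
inverse of `σ(p)`, `σ` being the main involution. -/
theorem twisted_conjugation_one_add_st {F V : Type*} [Field F] [AddCommGroup V]
    [Module F V] (Q : QuadraticForm F V) (s t : V) (hs : Q s = 0) (ht : Q t = 0)
    (hst : QuadraticMap.polar Q s t = 0)
    (q : CliffordAlgebra Q)
    (hq : involute (1 + ι Q s * ι Q t) * q = 1 ∧ q * involute (1 + ι Q s * ι Q t) = 1) :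
    ∀ x : V,
      (1 + ι Q s * ι Q t) * ι Q x * q =
        ι Q (x + QuadraticMap.polar Q t x • s - QuadraticMap.polar Q s x • t) := by
  obtain ⟨hq1, hq2⟩ := hq
  set S := ι Q s with hS
  set T := ι Q t with hT
  have hSS : S * S = 0 := by rw [hS, ι_sq_scalar, hs, map_zero]
  have hTT : T * T = 0 := by rw [hT, ι_sq_scalar, ht, map_zero]
  have hTS : T * S = -(S * T) := by
    have h := ι_mul_ι_add_swap (Q := Q) s t
    rw [hst, map_zero] at h
    rw [hS, hT]
    exact eq_neg_of_add_eq_zero_right h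
  have hSTST : (S * T) * (S * T) = 0 := by
    calc (S * T) * (S * T) = S * (T * S) * T := by noncomm_ring
      _ = S * (-(S * T)) * T := by rw [hTS]
      _ = -(S * S * (T * T)) := by noncomm_ring
      _ = 0 := by rw [hSS, zero_mul, neg_zero]
  have hinv : involute (1 + S * T) = 1 + S * T := by
    rw [hS, hT]
    simp [map_add, map_mul, involute_ι]
  rw [hinv] at hq1
  have hmul : (1 + T * S) * (1 + S * T) = 1 := by
    have expand : (1 + -(S * T)) * (1 + S * T) = 1 + (S*T) + -(S*T) + -((S*T)*(S*T)) := by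
      noncomm_ring
    rw [hTS, expand, hSTST]
    abel
  have hq' : q = 1 + T * S := by
    calc q = 1 * q := (one_mul q).symm
      _ = ((1 + T * S) * (1 + S * T)) * q := by rw [hmul]
      _ = (1 + T * S) * ((1 + S * T) * q) := by rw [mul_assoc]
      _ = (1 + T * S) * 1 := by rw [hq1]
      _ = 1 + T * S := mul_one _
  intro x
  rw [hq']
  set X := ι Q x with hX
  set bt := QuadraticMap.polar Q t x with hbt
  set bs := QuadraticMap.polar Q s x with hbs
  have hTX : T * X = algebraMap F _ bt - X * T := eq_sub_of_add_eq (ι_mul_ι_add_swap t x)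
  have hSX : S * X = algebraMap F _ bs - X * S := eq_sub_of_add_eq (ι_mul_ι_add_swap s x)
  have hc : ∀ (r : F) (m : CliffordAlgebra Q), m * algebraMap F _ r = r • m := by
    intro r m
    rw [← Algebra.commutes, ← Algebra.smul_def]
  have hc' : ∀ (r : F) (m : CliffordAlgebra Q), algebraMap F _ r * m = r • m := by
    intro r m
    rw [← Algebra.smul_def]
  have h1 : (S * T) * X = bt • S - bs • T + X * (S * T) := by
    calc (S * T) * X = S * (T * X) := mul_assoc _ _ _
      _ = S * algebraMap F _ bt - S * X * T := by rw [hTX, mul_sub, mul_assoc]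
      _ = bt • S - (algebraMap F _ bs - X * S) * T := by rw [hSX, hc]
      _ = bt • S - (bs • T - X * (S * T)) := by rw [sub_mul, hc', mul_assoc]
      _ = bt • S - bs • T + X * (S * T) := by abel
  have h2 : X * (T * S) = -(X * (S * T)) := by rw [hTS, mul_neg]
  have h3 : ((S * T) * X) * (T * S) = 0 := by
    rw [h1, hTS]
    have e1 : S * (S * T) = 0 := by rw [← mul_assoc, hSS, zero_mul]
    have e2 : T * (S * T) = 0 := by
      rw [← mul_assoc, hTS, neg_mul, mul_assoc, hTT, mul_zero, neg_zero]
    calc (bt • S - bs • T + X * (S * T)) * -(S * T)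
        = -(bt • (S * (S * T)) - bs • (T * (S * T)) + X * ((S * T) * (S * T))) := by
          rw [mul_neg]
          congr 1
          simp only [add_mul, sub_mul, smul_mul_assoc, mul_assoc]
      _ = 0 := by rw [e1, e2, hSTST, smul_zero, smul_zero, mul_zero, sub_zero, add_zero, neg_zero]
  have expand2 : (1 + S * T) * X * (1 + T * S)
      = X + X * (T * S) + ((S * T) * X + ((S * T) * X) * (T * S)) := by noncomm_ring
  rw [expand2, h3, h1, h2, map_sub, map_add, map_smul, map_smul]
  abel
end
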